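/- Let $F$ be a field, $C$ a finite-dimensional $F$-vector space of dimension $r$, and $f: C \to \mathbb{N}$ a function. Suppose $(c_1, \dotsc, c_r)$ and $(c_1', \dotsc, c_r')$ are two bases of $C$ that are both minimal relative to $f$, meaning $f(c_i) = \min\{f(c) \mid c \in C \setminus \operatorname{span}(c_1, \dotsc, c_{i-1})\}$ for all $i$ (and similarly for the primed basis). Then $f(c_i) = f(c_i')$ for all $i = 1, \dotsc, r$. -/

import Mathlib

open Submodule Module

private theorem minimal_basis_le (F : Type) [Field F] (C : Type)
    [AddCommGroup C] [Module F C] (r : ℕ) (f : C → ℕ)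
    (b b' : Basis (Fin r) F C)
    (hb : ∀ i : Fin r, ∀ c : C,
      c ∉ Submodule.span F (b '' {j | j < i}) → f (b i) ≤ f c)
    (hb' : ∀ i : Fin r, ∀ c : C,
      c ∉ Submodule.span F (b' '' {j | j < i}) → f (b' i) ≤ f c)
    (i : Fin r) : f (b i) ≤ f (b' i) := by
  haveI : FiniteDimensional F C := Module.Finite.of_basis b
  have hex : ∃ j : Fin r, j ≤ i ∧ b' j ∉ Submodule.span F (b '' {k | k < i}) := by
    by_contra h
    push_neg at h
    set S := Submodule.span F (b '' {k | k < i}) with hS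
    have hmem : ∀ j : Set.Iic i, b' ↑j ∈ S := fun j => h j j.2
    have hli : LinearIndependent F (fun j : Set.Iic i => (⟨b' ↑j, hmem j⟩ : S)) := by
      apply LinearIndependent.of_comp S.subtype
      exact b'.linearIndependent.comp _ Subtype.val_injective
    have h1 := hli.fintype_card_le_finrank
    rw [← Set.toFinset_card, Set.toFinset_Iic, Fin.card_Iic] at h1
    have h2 : finrank F S ≤ (i : ℕ) := by
      have himg : b '' {k | k < i} = Set.range (fun k : Set.Iio i => b ↑k) := by
        rw [← Set.image_eq_range]; rfl
      rw [hS, himg]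
      exact (finrank_range_le_card _).trans (by rw [← Set.toFinset_card, Set.toFinset_Iio, Fin.card_Iio])
    omega
  obtain ⟨j, hji, hnot⟩ := hex
  refine (hb i _ hnot).trans (hb' j (b' i) ?_)
  apply b'.linearIndependent.notMem_span_image
  simp only [Set.mem_setOf_eq]
  exact fun hij => absurd hji (not_le.mpr hij)

/-- Any two bases of an `r`-dimensional vector space that are minimal relative to a
function `f : C → ℕ` (each vector greedily minimizes `f` outside the span of the
previous ones) have the same value vector `(f(c₁), …, f(c_r))`. -/
theorem minimal_basis_value_vector_unique (F : Type) [Field F] (C : Type)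
    [AddCommGroup C] [Module F C] (r : ℕ) (f : C → ℕ)
    (b b' : Basis (Fin r) F C)
    (hb : ∀ i : Fin r, ∀ c : C,
      c ∉ Submodule.span F (b '' {j | j < i}) → f (b i) ≤ f c)
    (hb' : ∀ i : Fin r, ∀ c : C,
      c ∉ Submodule.span F (b' '' {j | j < i}) → f (b' i) ≤ f c) :
    ∀ i : Fin r, f (b i) = f (b' i) := fun i =>
  le_antisymm (minimal_basis_le F C r f b b' hb hb' i)
    (minimal_basis_le F C r f b' b hb' hb i)
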